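/- arXiv:1502.06036 — 2 statements merged into one kernel-verified Lean document; each statement's English description precedes it below -/
import Mathlib

section
/- Let (X, 𝒳, μ) be a standard probability space and let (αₙ) be a sequence of countable measurable partitions with ∑ₙ H(αₙ) < ∞. Then the join ⋁ₙ αₙ (the partition whose atoms are the nonempty intersections ⋂ₙ Aₙ with Aₙ ∈ αₙ) is, up to null sets, a countable partition and H(⋁ₙ αₙ) ≤ ∑ₙ H(αₙ). -/
/-!
Let `I_N x = -log μ (C_N x)`, where `C_N x` is the cell containing `x` of the join of the first
`N` partitions. Then `∫ I_N = H(α₀ ∨ ⋯ ∨ α_{N-1}) ≤ ∑_{n<N} H(αₙ)` by subadditivity of entropy,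
and by continuity of measure `I_N x` increases to `-log μ (atom of x)`. Monotone convergence
gives `∫ -log μ (atom of x) ≤ ∑ₙ H(αₙ) < ∞`, so almost every point lies in an atom of positive
measure, of which there are only countably many; and the same integral dominates the entropy of
any family of distinct atoms.
-/

open MeasureTheory
open scoped ENNReal

/-- Shannon entropy of a countable family of sets (intended: a partition), with 0 log 0 = 0. -/
noncomputable def partitionEntropy {X : Type*} [MeasurableSpace X] (μ : Measure X)
    {ι : Type*} (A : ι → Set X) : ℝ≥0∞ :=
  ∑' i, ENNReal.ofReal (Real.negMulLog (μ (A i)).toReal)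

open Set Function

lemma Set.Countable.exists_injective_nat_subset_range {α : Type*} [Infinite α] {S : Set α}
    (hS : S.Countable) : ∃ c : ℕ → α, Injective c ∧ S ⊆ range c := by
  let e := _root_.Infinite.natEmbedding α
  set T := S ∪ range e
  have : Countable T := (hS.union (countable_range _)).to_subtype
  have : Infinite T :=
    ((infinite_range_of_injective e.injective).mono subset_union_right).to_subtype
  obtain ⟨_⟩ := nonempty_denumerable T
  refine ⟨fun k => (Denumerable.eqv T).symm k, Subtype.val_injective.comp (Equiv.injective _),
    fun t ht => ⟨Denumerable.eqv T ⟨t, Or.inl ht⟩, by simp⟩⟩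

lemma Real.negMulLog_add_self_le {p r : ℝ} (hp : 0 < p) (hr : 0 < r) :
    negMulLog p + p ≤ -(p * log r) + r := by
  have h := mul_le_mul_of_nonneg_left (log_le_sub_one_of_pos (div_pos hr hp)) hp.le
  rw [log_div hr.ne' hp.ne', mul_sub_one, mul_div_cancel₀ _ hp.ne'] at h
  simp only [negMulLog]
  linarith

namespace ENNReal

/-- `-log m`, truncated at `0` for `m ≥ 1`; note `negLog 0 = ⊤`, unlike `-Real.log 0 = 0`. -/
noncomputable def negLog (m : ℝ≥0∞) : ℝ≥0∞ := (-log m).toENNReal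

@[simp] lemma negLog_zero : negLog 0 = ⊤ := by simp [negLog]

lemma negLog_eq_top_iff {m : ℝ≥0∞} : negLog m = ⊤ ↔ m = 0 := by
  simp [negLog, EReal.toENNReal_eq_top_iff]

lemma negLog_of_ne_zero {m : ℝ≥0∞} (h0 : m ≠ 0) (htop : m ≠ ⊤) :
    negLog m = ENNReal.ofReal (-Real.log m.toReal) := by
  rw [negLog, log_pos_real h0 htop, ← EReal.coe_neg,
    EReal.toENNReal_of_ne_top (EReal.coe_ne_top _), EReal.toReal_coe]

lemma antitone_negLog : Antitone negLog :=
  fun _ _ h => EReal.toENNReal_le_toENNReal (EReal.neg_le_neg_iff.2 (log_monotone h))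

lemma continuous_negLog : Continuous negLog :=
  EReal.continuous_toENNReal.comp (continuous_neg.comp continuous_log)

lemma negLog_iInf {ι : Sort*} (f : ι → ℝ≥0∞) :
    negLog (⨅ i, f i) = ⨆ i, negLog (f i) :=
  antitone_negLog.map_iInf_of_continuousAt continuous_negLog.continuousAt (by simp [negLog])

lemma negLog_mul {a b : ℝ≥0∞} (ha : a ≤ 1) (hb : b ≤ 1) :
    negLog (a * b) = negLog a + negLog b := by
  have ha' : log a ≤ 0 := by simpa using log_monotone ha
  have hb' : log b ≤ 0 := by simpa using log_monotone hb
  rw [negLog, log_mul_add, EReal.neg_add (Or.inr (ne_top_of_le_ne_top EReal.zero_ne_top hb'))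
    (Or.inl (ne_top_of_le_ne_top EReal.zero_ne_top ha')), sub_eq_add_neg,
    EReal.toENNReal_add (by simpa using ha') (by simpa using hb')]
  rfl

lemma mul_negLog {m : ℝ≥0∞} (hm : m ≠ ⊤) :
    m * negLog m = ENNReal.ofReal (Real.negMulLog m.toReal) := by
  rcases eq_or_ne m 0 with rfl | h0
  · simp
  rw [negLog_of_ne_zero h0 hm, Real.negMulLog, neg_mul, ← mul_neg,
    ENNReal.ofReal_mul toReal_nonneg, ENNReal.ofReal_toReal hm]

lemma mul_negLog_add_le {p : ℝ≥0∞} (r : ℝ≥0∞) (hp : p ≤ 1) :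
    p * negLog p + p ≤ p * negLog r + r := by
  rcases eq_or_ne p 0 with rfl | hp0
  · simp
  rcases eq_or_ne r 0 with rfl | hr0
  · simp [hp0]
  rcases eq_or_ne r ⊤ with rfl | hrtop
  · simp
  have hptop : p ≠ ⊤ := ne_top_of_le_ne_top one_ne_top hp
  have hnn : 0 ≤ Real.negMulLog p.toReal :=
    Real.negMulLog_nonneg toReal_nonneg (toReal_le_of_le_ofReal zero_le_one (by simpa using hp))
  calc p * negLog p + p = ENNReal.ofReal (Real.negMulLog p.toReal + p.toReal) := by
        rw [mul_negLog hptop, ofReal_add hnn toReal_nonneg, ofReal_toReal hptop]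
    _ ≤ ENNReal.ofReal (-(p.toReal * Real.log r.toReal) + r.toReal) :=
        ofReal_le_ofReal (Real.negMulLog_add_self_le (toReal_pos hp0 hptop) (toReal_pos hr0 hrtop))
    _ ≤ ENNReal.ofReal (p.toReal * -Real.log r.toReal) + ENNReal.ofReal r.toReal := by
        rw [mul_neg]
        exact ofReal_add_le
    _ = p * negLog r + r := by
        rw [ofReal_mul toReal_nonneg, ofReal_toReal hptop, ofReal_toReal hrtop,
          negLog_of_ne_zero hr0 hrtop]

end ENNReal

open ENNReal

section Partitions

variable {X ι κ : Type*}

def finJoin (A : ℕ → ι → Set X) (N : ℕ) (v : Fin N → ι) : Set X :=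
  ⋂ i : Fin N, A i (v i)

variable {A : ℕ → ι → Set X}

lemma finJoin_snoc (N : ℕ) (w : Fin N → ι) (k : ι) :
    finJoin A (N + 1) (Fin.snoc w k) = A N k ∩ finJoin A N w := by
  ext x
  simp [finJoin, Fin.forall_fin_succ', and_comm]

lemma antitone_finJoin (t : ℕ → ι) : Antitone fun N => finJoin A N (fun i => t i) :=
  fun _ _ hNM _ hx => mem_iInter.2 fun i => mem_iInter.1 hx (Fin.castLE hNM i)

lemma iInter_finJoin (t : ℕ → ι) : ⋂ N, finJoin A N (fun i => t i) = ⋂ n, A n (t n) := by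
  ext x
  simp only [finJoin, mem_iInter]
  exact ⟨fun h n => h (n + 1) (Fin.last n), fun h N i => h i⟩

variable [MeasurableSpace X] {μ : Measure X}

structure IsMeasurablePartition (P : ι → Set X) : Prop where
  measurableSet : ∀ i, MeasurableSet (P i)
  pairwise_disjoint : Pairwise (Disjoint on P)
  iUnion_eq_univ : ⋃ i, P i = univ

namespace IsMeasurablePartition

variable {P : ι → Set X} {Q : κ → Set X}

lemma exists_mem (hP : IsMeasurablePartition P) (x : X) : ∃ i, x ∈ P i :=
  mem_iUnion.1 (hP.iUnion_eq_univ ▸ mem_univ x)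

lemma eq_of_mem (hP : IsMeasurablePartition P) {x : X} {i j : ι} (hi : x ∈ P i)
    (hj : x ∈ P j) : i = j :=
  by_contra fun h => disjoint_left.1 (hP.pairwise_disjoint h) hi hj

lemma tsum_measure_inter [Countable ι] (hP : IsMeasurablePartition P) {S : Set X}
    (hS : MeasurableSet S) : ∑' i, μ (S ∩ P i) = μ S := by
  rw [← measure_iUnion (fun i j h => (hP.pairwise_disjoint h).mono inter_subset_right
    inter_subset_right) fun i => hS.inter (hP.measurableSet i), ← inter_iUnion, hP.iUnion_eq_univ,
    inter_univ]

lemma inter (hP : IsMeasurablePartition P) (hQ : IsMeasurablePartition Q) :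
    IsMeasurablePartition fun ij : ι × κ => P ij.1 ∩ Q ij.2 where
  measurableSet ij := (hP.measurableSet ij.1).inter (hQ.measurableSet ij.2)
  pairwise_disjoint ij ij' h := by
    rcases eq_or_ne ij.1 ij'.1 with h1 | h1
    · have h2 : ij.2 ≠ ij'.2 := fun h2 => h (Prod.ext h1 h2)
      exact (hQ.pairwise_disjoint h2).mono inter_subset_right inter_subset_right
    · exact (hP.pairwise_disjoint h1).mono inter_subset_left inter_subset_left
  iUnion_eq_univ := eq_univ_of_forall fun x => by
    obtain ⟨i, hi⟩ := hP.exists_mem x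
    obtain ⟨j, hj⟩ := hQ.exists_mem x
    exact mem_iUnion.2 ⟨(i, j), hi, hj⟩

lemma tsum_measure [IsProbabilityMeasure μ] [Countable ι] (hP : IsMeasurablePartition P) :
    ∑' i, μ (P i) = 1 := by
  rw [← measure_iUnion hP.pairwise_disjoint hP.measurableSet, hP.iUnion_eq_univ, measure_univ]

lemma finJoin (hA : ∀ n, IsMeasurablePartition (A n)) (N : ℕ) :
    IsMeasurablePartition (finJoin A N) where
  measurableSet v := .iInter fun i => (hA i).measurableSet (v i)
  pairwise_disjoint v w h := by
    obtain ⟨i, hi⟩ := Function.ne_iff.1 h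
    exact ((hA i).pairwise_disjoint hi).mono (iInter_subset _ i) (iInter_subset _ i)
  iUnion_eq_univ := eq_univ_of_forall fun x => by
    choose k hk using fun n => (hA n).exists_mem x
    exact mem_iUnion.2 ⟨fun i => k i, mem_iInter.2 fun i => hk i⟩

end IsMeasurablePartition

lemma partitionEntropy_eq_tsum_mul_negLog [IsFiniteMeasure μ] (P : ι → Set X) :
    partitionEntropy μ P = ∑' i, μ (P i) * negLog (μ (P i)) :=
  tsum_congr fun _ => (mul_negLog (measure_ne_top μ _)).symm

lemma partitionEntropy_inter_le [IsProbabilityMeasure μ] [Countable ι] [Countable κ]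
    {P : ι → Set X} {Q : κ → Set X} (hP : IsMeasurablePartition P)
    (hQ : IsMeasurablePartition Q) :
    partitionEntropy μ (fun ij : ι × κ => P ij.1 ∩ Q ij.2)
      ≤ partitionEntropy μ P + partitionEntropy μ Q := by
  have hrow i : ∑' j, μ (P i ∩ Q j) = μ (P i) := hQ.tsum_measure_inter (hP.measurableSet i)
  have hcol j : ∑' i, μ (P i ∩ Q j) = μ (Q j) := by
    simpa only [inter_comm] using hP.tsum_measure_inter (hQ.measurableSet j)
  have hjoin : ∑' ij : ι × κ, μ (P ij.1 ∩ Q ij.2) = 1 := (hP.inter hQ).tsum_measure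
  have hprod : ∑' ij : ι × κ, μ (P ij.1) * μ (Q ij.2) = 1 := by
    rw [ENNReal.tsum_prod', ← hP.tsum_measure (μ := μ)]
    simp only [ENNReal.tsum_mul_left, hQ.tsum_measure, mul_one]
  -- Gibbs' inequality against the product weights `μ (P i) * μ (Q j)`.
  have hgibbs (ij : ι × κ) : μ (P ij.1 ∩ Q ij.2) * negLog (μ (P ij.1 ∩ Q ij.2))
      + μ (P ij.1 ∩ Q ij.2) ≤ μ (P ij.1 ∩ Q ij.2) * negLog (μ (P ij.1))
      + μ (P ij.1 ∩ Q ij.2) * negLog (μ (Q ij.2)) + μ (P ij.1) * μ (Q ij.2) := by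
    rw [← mul_add, ← negLog_mul prob_le_one prob_le_one]
    exact mul_negLog_add_le _ prob_le_one
  have hsum := ENNReal.tsum_le_tsum hgibbs
  simp only [ENNReal.tsum_add, hjoin, hprod] at hsum
  rw [partitionEntropy_eq_tsum_mul_negLog, partitionEntropy_eq_tsum_mul_negLog,
    partitionEntropy_eq_tsum_mul_negLog]
  refine (ENNReal.add_le_add_iff_right one_ne_top).1 (hsum.trans_eq ?_)
  rw [ENNReal.tsum_prod', ENNReal.tsum_prod',
    ENNReal.tsum_comm (f := fun i j => μ (P i ∩ Q j) * negLog (μ (Q j)))]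
  simp only [ENNReal.tsum_mul_right, hrow, hcol]

lemma partitionEntropy_finJoin_le [IsProbabilityMeasure μ] [Countable ι]
    (hA : ∀ n, IsMeasurablePartition (A n)) (N : ℕ) :
    partitionEntropy μ (finJoin A N) ≤ ∑ n ∈ Finset.range N, partitionEntropy μ (A n) := by
  induction N with
  | zero => simp [partitionEntropy, finJoin]
  | succ N ih =>
    have hsnoc : partitionEntropy μ (finJoin A (N + 1))
        = partitionEntropy μ (fun kw : ι × (Fin N → ι) => A N kw.1 ∩ finJoin A N kw.2) := by
      rw [partitionEntropy, partitionEntropy, ← (Fin.snocEquiv fun _ => ι).tsum_eq]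
      exact tsum_congr fun kw => by rw [← finJoin_snoc]; rfl
    rw [hsnoc, Finset.sum_range_succ, add_comm]
    exact (partitionEntropy_inter_le (hA N) (.finJoin hA N)).trans (by gcongr)

noncomputable def partitionInfo (μ : Measure X) (P : ι → Set X) (x : X) : ℝ≥0∞ :=
  ∑' i, (P i).indicator (fun _ => negLog (μ (P i))) x

section Info

variable {P : ι → Set X}

lemma measurable_partitionInfo [Countable ι] (hP : ∀ i, MeasurableSet (P i)) :
    Measurable (partitionInfo μ P) :=
  .tsum fun i => measurable_const.indicator (hP i)

lemma lintegral_partitionInfo [IsFiniteMeasure μ] [Countable ι]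
    (hP : ∀ i, MeasurableSet (P i)) :
    ∫⁻ x, partitionInfo μ P x ∂μ = partitionEntropy μ P := by
  unfold partitionInfo
  rw [partitionEntropy_eq_tsum_mul_negLog,
    lintegral_tsum fun i => (measurable_const.indicator (hP i)).aemeasurable]
  exact tsum_congr fun i => by rw [lintegral_indicator_const (hP i), mul_comm]

lemma partitionInfo_of_mem (hP : Pairwise (Disjoint on P)) {x : X} {i : ι} (hx : x ∈ P i) :
    partitionInfo μ P x = negLog (μ (P i)) := by
  rw [partitionInfo, tsum_eq_single i fun j hj =>
    indicator_of_notMem (disjoint_left.1 (hP hj.symm) hx) _, indicator_of_mem hx]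

lemma partitionInfo_le (hP : Pairwise (Disjoint on P)) {x : X} {a : ℝ≥0∞}
    (h : ∀ i, x ∈ P i → negLog (μ (P i)) ≤ a) : partitionInfo μ P x ≤ a := by
  by_cases hx : ∃ i, x ∈ P i
  · obtain ⟨i, hi⟩ := hx
    exact (partitionInfo_of_mem hP hi).trans_le (h i hi)
  · rw [not_exists] at hx
    simp [partitionInfo, hx]

end Info

lemma pairwise_disjoint_iInter (hA : ∀ n, IsMeasurablePartition (A n)) :
    Pairwise (Disjoint on fun t : ℕ → ι => ⋂ n, A n (t n)) := fun t t' h => by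
  obtain ⟨n, hn⟩ := Function.ne_iff.1 h
  exact ((hA n).pairwise_disjoint hn).mono (iInter_subset _ n) (iInter_subset _ n)

section Atoms

variable (hA : ∀ n, IsMeasurablePartition (A n))
include hA

section IndexChoice

variable {s : X → ℕ → ι} (hs : ∀ x n, x ∈ A n (s x n))
include hs

lemma partitionInfo_finJoin (N : ℕ) (x : X) :
    partitionInfo μ (finJoin A N) x = negLog (μ (finJoin A N fun i => s x i)) :=
  partitionInfo_of_mem (IsMeasurablePartition.finJoin hA N).pairwise_disjoint
    (mem_iInter.2 fun i => hs x i)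

lemma negLog_measure_iInter_eq_iSup [IsFiniteMeasure μ] (x : X) :
    negLog (μ (⋂ n, A n (s x n))) = ⨆ N, partitionInfo μ (finJoin A N) x := by
  rw [← iInter_finJoin, (antitone_finJoin (s x)).measure_iInter
    (fun N => ((IsMeasurablePartition.finJoin hA N).measurableSet _).nullMeasurableSet)
    ⟨0, measure_ne_top μ _⟩, negLog_iInf]
  simp only [partitionInfo_finJoin hA hs]

lemma lintegral_negLog_measure_iInter_le [IsProbabilityMeasure μ] [Countable ι] :
    ∫⁻ x, negLog (μ (⋂ n, A n (s x n))) ∂μ ≤ ∑' n, partitionEntropy μ (A n) := by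
  have hmono : Monotone fun N => partitionInfo μ (finJoin A N) := fun N M hNM x => by
    simp only [partitionInfo_finJoin hA hs]
    exact antitone_negLog (measure_mono (antitone_finJoin (s x) hNM))
  simp_rw [negLog_measure_iInter_eq_iSup hA hs]
  rw [lintegral_iSup (fun N => measurable_partitionInfo
    (IsMeasurablePartition.finJoin hA N).measurableSet) hmono]
  exact iSup_le fun N => (lintegral_partitionInfo
      (IsMeasurablePartition.finJoin hA N).measurableSet).trans_le
    ((partitionEntropy_finJoin_le hA N).trans (ENNReal.sum_le_tsum _))

lemma ae_measure_iInter_ne_zero [IsProbabilityMeasure μ] [Countable ι]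
    (hfin : ∑' n, partitionEntropy μ (A n) ≠ ⊤) :
    ∀ᵐ x ∂μ, μ (⋂ n, A n (s x n)) ≠ 0 := by
  have hmeas : Measurable fun x => negLog (μ (⋂ n, A n (s x n))) := by
    simp_rw [negLog_measure_iInter_eq_iSup hA hs]
    exact .iSup fun N => measurable_partitionInfo (IsMeasurablePartition.finJoin hA N).measurableSet
  filter_upwards [ae_lt_top hmeas ((lintegral_negLog_measure_iInter_le hA hs).trans_lt
    hfin.lt_top).ne] with x hx
  exact negLog_eq_top_iff.not.1 hx.ne

end IndexChoice

lemma measure_iUnion_iInter_eq_one [IsProbabilityMeasure μ] [Countable ι]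
    (hfin : ∑' n, partitionEntropy μ (A n) ≠ ⊤) {c : ℕ → ℕ → ι}
    (hc : {t | 0 < μ (⋂ n, A n (t n))} ⊆ range c) : μ (⋃ k, ⋂ n, A n (c k n)) = 1 := by
  choose s hs using fun x n => (hA n).exists_mem x
  have hae : ∀ᵐ x ∂μ, x ∈ ⋃ k, ⋂ n, A n (c k n) := by
    filter_upwards [ae_measure_iInter_ne_zero hA hs hfin] with x hx
    obtain ⟨k, hk⟩ := hc (pos_iff_ne_zero.2 hx)
    exact mem_iUnion.2 ⟨k, hk ▸ mem_iInter.2 (hs x)⟩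
  rwa [ae_mem_iff_measure_eq (MeasurableSet.iUnion fun k => .iInter fun n =>
    (hA n).measurableSet _).nullMeasurableSet, measure_univ] at hae

lemma partitionEntropy_iInter_le [IsProbabilityMeasure μ] [Countable ι] {c : ℕ → ℕ → ι}
    (hc : Injective c) :
    partitionEntropy μ (fun k => ⋂ n, A n (c k n)) ≤ ∑' n, partitionEntropy μ (A n) := by
  choose s hs using fun x n => (hA n).exists_mem x
  have hle x : partitionInfo μ (fun k => ⋂ n, A n (c k n)) x ≤ negLog (μ (⋂ n, A n (s x n))) :=
    partitionInfo_le ((pairwise_disjoint_iInter hA).comp_of_injective hc) fun k hk => by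
      have hck : c k = s x := funext fun n => (hA n).eq_of_mem (mem_iInter.1 hk n) (hs x n)
      simp only [hck, le_rfl]
  rw [← lintegral_partitionInfo fun k => .iInter fun n => (hA n).measurableSet _]
  exact (lintegral_mono hle).trans (lintegral_negLog_measure_iInter_le hA hs)

end Atoms

end Partitions

theorem join_of_partitions_countable_and_entropy_subadditive_general
    {X : Type*} [MeasurableSpace X]
    (μ : Measure X) [IsProbabilityMeasure μ]
    (A : ℕ → ℕ → Set X)
    (hm : ∀ n k, MeasurableSet (A n k))
    (hd : ∀ n, Pairwise (Function.onFun Disjoint (A n)))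
    (hc : ∀ n, (⋃ k, A n k) = Set.univ)
    (hfin : (∑' n, partitionEntropy μ (A n)) ≠ ⊤) :
    ∃ c : ℕ → (ℕ → ℕ), Function.Injective c ∧
      μ (⋃ k, ⋂ n, A n (c k n)) = 1 ∧
      partitionEntropy μ (fun k => ⋂ n, A n (c k n)) ≤ ∑' n, partitionEntropy μ (A n) := by
  have hA n : IsMeasurablePartition (A n) := ⟨hm n, hd n, hc n⟩
  have hpos : {t : ℕ → ℕ | 0 < μ (⋂ n, A n (t n))}.Countable :=
    Measure.countable_meas_pos_of_disjoint_of_meas_iUnion_ne_top μ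
      (fun t => .iInter fun n => hm n (t n)) (pairwise_disjoint_iInter hA) (measure_ne_top μ _)
  obtain ⟨c, hc_inj, hc_range⟩ := hpos.exists_injective_nat_subset_range
  exact ⟨c, hc_inj, measure_iUnion_iInter_eq_one hA hfin hc_range,
    partitionEntropy_iInter_le hA hc_inj⟩

/-- If (αₙ) is a sequence of countable measurable partitions with
∑ₙ H(αₙ) < ∞, then the join ⋁ₙ αₙ is, up to null sets, a countable partition (countably many
of its atoms ⋂ₙ Aₙ, Aₙ ∈ αₙ, cover a conull set) and H(⋁ₙ αₙ) ≤ ∑ₙ H(αₙ). -/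
theorem join_of_partitions_countable_and_entropy_subadditive
    {X : Type*} [MeasurableSpace X] [StandardBorelSpace X]
    (μ : Measure X) [IsProbabilityMeasure μ]
    (A : ℕ → ℕ → Set X)
    (hm : ∀ n k, MeasurableSet (A n k))
    (hd : ∀ n, Pairwise (Function.onFun Disjoint (A n)))
    (hc : ∀ n, (⋃ k, A n k) = Set.univ)
    (hfin : (∑' n, partitionEntropy μ (A n)) ≠ ⊤) :
    ∃ c : ℕ → (ℕ → ℕ), Function.Injective c ∧
      μ (⋃ k, ⋂ n, A n (c k n)) = 1 ∧
      partitionEntropy μ (fun k => ⋂ n, A n (c k n)) ≤ ∑' n, partitionEntropy μ (A n) :=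
  join_of_partitions_countable_and_entropy_subadditive_general μ A hm hd hc hfin
end

section
/- Let (X, 𝒳, μ) be a standard probability space, let I be a linearly ordered set, and let (𝒜ᵢ)_{i∈I} be a family of sub-σ-algebras of 𝒳 that is monotone: 𝒜ᵢ ⊆ 𝒜ⱼ whenever i ≤ j. Then there exists a countable subset J ⊆ I such that the σ-algebra generated by ⋃_{i∈I} 𝒜ᵢ equals (up to null sets) the σ-algebra generated by ⋃_{j∈J} 𝒜ⱼ. -/
/-!
The measure algebra of a standard probability space is separable: there is a countable family `D`
of sets that approximates every measurable set arbitrarily well. Since the family is monotone,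
`⋃ i, 𝒜 i` is an algebra of sets generating `⨆ i, 𝒜 i`, hence dense in it. For each `d ∈ D`
and `n`, pick one index `i` such that some `𝒜 i`-set is `1/n`-close to `d`, whenever such an
index exists; the countably many indices so picked form `J`. Every set of `⨆ i, 𝒜 i` is then a
limit of `⨆ j ∈ J, 𝒜 j`-sets, and by Borel–Cantelli the `limsup` of a fast-converging sequence of
approximants agrees with it up to a null set.
-/

open Filter MeasureTheory Set
open scoped ENNReal symmDiff

theorem exists_countable_forall_exists_mem {α ι : Type*} [Countable α] (p : α → ι → Prop) :
    ∃ J : Set ι, J.Countable ∧ ∀ a, (∃ i, p a i) → ∃ j ∈ J, p a j :=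
  ⟨range fun a : {a // ∃ i, p a i} ↦ a.2.choose, countable_range _,
    fun a ha ↦ ⟨_, mem_range_self ⟨a, ha⟩, ha.choose_spec⟩⟩

theorem Set.symmDiff_limsup_subset {α ι : Type*} {f : Filter ι} [f.NeBot] (s : Set α)
    (b : ι → Set α) : s ∆ limsup b f ⊆ limsup (fun i ↦ s ∆ b i) f := by
  intro x hx
  simp only [mem_limsup_iff_frequently_mem, Set.mem_symmDiff] at hx ⊢
  rcases hx with ⟨hxs, hxb⟩ | ⟨hxb, hxs⟩
  · exact (not_frequently.1 hxb).frequently.mono fun _ hx ↦ Or.inl ⟨hxs, hx⟩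
  · exact hxb.mono fun _ hx ↦ Or.inr ⟨hx, hxs⟩

theorem isSetAlgebra_iUnion_of_directed {X ι : Type*} [Nonempty ι]
    {𝒜 : ι → MeasurableSpace X} (hdir : Directed (· ≤ ·) 𝒜) :
    IsSetAlgebra (⋃ i, {s | MeasurableSet[𝒜 i] s}) where
  empty_mem := mem_iUnion.2 ⟨Classical.arbitrary ι, (𝒜 _).measurableSet_empty⟩
  compl_mem := by
    simp only [mem_iUnion]
    exact fun s ⟨i, hs⟩ ↦ ⟨i, hs.compl⟩
  union_mem := by
    simp only [mem_iUnion]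
    rintro s t ⟨i, hs⟩ ⟨j, ht⟩
    obtain ⟨k, hik, hjk⟩ := hdir i j
    exact ⟨k, (hik _ hs).union (hjk _ ht)⟩

namespace MeasureTheory

variable {X : Type*} {m : MeasurableSpace X} {μ : Measure X}

theorem exists_measurableSet_measure_symmDiff_eq_zero {m' : MeasurableSpace X} {s : Set X}
    (h : ∀ ε ≠ 0, ∃ t, MeasurableSet[m'] t ∧ μ (s ∆ t) < ε) :
    ∃ t, MeasurableSet[m'] t ∧ μ (s ∆ t) = 0 := by
  obtain ⟨ε, hε, hsum⟩ := ENNReal.exists_pos_sum_of_countable one_ne_zero ℕ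
  choose b hb hbs using fun n ↦ h (ε n) (by simpa using (hε n).ne')
  refine ⟨limsup b atTop, MeasurableSet.measurableSet_limsup hb,
    measure_mono_null (symmDiff_limsup_subset s b) (measure_limsup_atTop_eq_zero ?_)⟩
  exact ne_top_of_le_ne_top ENNReal.one_ne_top
    ((ENNReal.tsum_le_tsum fun n ↦ (hbs n).le).trans hsum.le)

theorem Measure.MeasureDense.exists_measure_symmDiff_lt {𝒜 : Set (Set X)}
    (h𝒜 : μ.MeasureDense 𝒜) {s : Set X} (hs : MeasurableSet s) (hμs : μ s ≠ ∞) {ε : ℝ≥0∞}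
    (hε : ε ≠ 0) :
    ∃ t ∈ 𝒜, μ (s ∆ t) < ε := by
  obtain ⟨r, -, hr, hrε⟩ := ENNReal.lt_iff_exists_real_btwn.1 (pos_iff_ne_zero.2 hε)
  obtain ⟨t, ht, hst⟩ := h𝒜.approx s hs hμs r (ENNReal.ofReal_pos.1 hr)
  exact ⟨t, ht, hst.trans hrε⟩

theorem exists_countable_approx_of_isSeparable (μ : Measure X) [IsFiniteMeasure μ]
    [IsSeparable μ] {ι : Type*} (𝒜 : ι → Set (Set X))
    (h𝒜 : ∀ i, ∀ s ∈ 𝒜 i, MeasurableSet s) :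
    ∃ J : Set ι, J.Countable ∧
      ∀ i, ∀ s ∈ 𝒜 i, ∀ ε ≠ 0, ∃ j ∈ J, ∃ t ∈ 𝒜 j, μ (s ∆ t) < ε := by
  obtain ⟨D, hDc, hD⟩ := exists_countable_measureDense μ
  have := hDc.to_subtype
  obtain ⟨J, hJc, hJ⟩ := exists_countable_forall_exists_mem
    fun (dn : D × ℕ) i ↦ ∃ t ∈ 𝒜 i, μ (dn.1 ∆ t) < (dn.2 : ℝ≥0∞)⁻¹
  refine ⟨J, hJc, fun i s hs ε hε ↦ ?_⟩
  obtain ⟨n, hn⟩ := ENNReal.exists_inv_nat_lt (ENNReal.half_pos hε).ne'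
  obtain ⟨d, hdD, hsd⟩ := hD.exists_measure_symmDiff_lt (h𝒜 i s hs) (measure_ne_top μ s)
    (ENNReal.inv_ne_zero.2 (ENNReal.natCast_ne_top n))
  -- `s` itself witnesses that `d` is `1/n`-close to some member of the family
  obtain ⟨j, hj, t, ht, hdt⟩ := hJ (⟨d, hdD⟩, n) ⟨i, s, hs, by rwa [symmDiff_comm]⟩
  refine ⟨j, hj, t, ht, ?_⟩
  calc μ (s ∆ t) ≤ μ (s ∆ d) + μ (d ∆ t) := measure_symmDiff_le s d t
    _ < ε / 2 + ε / 2 := ENNReal.add_lt_add (hsd.trans hn) (hdt.trans hn)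
    _ = ε := ENNReal.add_halves ε

theorem exists_measure_symmDiff_lt_of_measurableSet_iSup (μ : Measure X) [IsFiniteMeasure μ]
    {ι : Type*} [Nonempty ι] {𝒜 : ι → MeasurableSpace X} (hle : ∀ i, 𝒜 i ≤ m)
    (hdir : Directed (· ≤ ·) 𝒜) {s : Set X} (hs : MeasurableSet[⨆ i, 𝒜 i] s) {ε : ℝ≥0∞}
    (hε : ε ≠ 0) :
    ∃ i t, MeasurableSet[𝒜 i] t ∧ μ (s ∆ t) < ε := by
  have hFle : ⨆ i, 𝒜 i ≤ m := iSup_le hle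
  have hdense :
      Measure.MeasureDense (m := ⨆ i, 𝒜 i) (μ.trim hFle) (⋃ i, {s | MeasurableSet[𝒜 i] s}) :=
    .of_generateFrom_isSetAlgebra_finite (m := ⨆ i, 𝒜 i) _
      (isSetAlgebra_iUnion_of_directed hdir)
      (MeasurableSpace.generateFrom_iUnion_measurableSet 𝒜).symm
  obtain ⟨t, ht, hst⟩ := hdense.exists_measure_symmDiff_lt hs (measure_ne_top _ s) hε
  obtain ⟨i, hti⟩ := mem_iUnion.1 ht
  refine ⟨i, t, hti, ?_⟩
  have hst_meas : MeasurableSet[⨆ i, 𝒜 i] (s ∆ t) :=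
    MeasurableSet.symmDiff (m := ⨆ i, 𝒜 i) hs (le_iSup 𝒜 i t hti)
  rwa [trim_measurableSet_eq hFle hst_meas] at hst

theorem exists_countable_approx_iSup (μ : Measure X) [IsFiniteMeasure μ] [IsSeparable μ]
    {ι : Type*} [Nonempty ι] (𝒜 : ι → MeasurableSpace X) (hle : ∀ i, 𝒜 i ≤ m)
    (hdir : Directed (· ≤ ·) 𝒜) :
    ∃ J : Set ι, J.Countable ∧ ∀ s, MeasurableSet[⨆ i, 𝒜 i] s →
      ∀ ε ≠ 0, ∃ t, MeasurableSet[⨆ j ∈ J, 𝒜 j] t ∧ μ (s ∆ t) < ε := by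
  obtain ⟨J, hJc, hJ⟩ :=
    exists_countable_approx_of_isSeparable μ (fun i ↦ {s | MeasurableSet[𝒜 i] s})
      fun i _ hs ↦ hle i _ hs
  refine ⟨J, hJc, fun s hs ε hε ↦ ?_⟩
  obtain ⟨i, a, ha, hsa⟩ :=
    exists_measure_symmDiff_lt_of_measurableSet_iSup μ hle hdir hs (ENNReal.half_pos hε).ne'
  obtain ⟨j, hj, t, ht, hat⟩ := hJ i a ha _ (ENNReal.half_pos hε).ne'
  refine ⟨t, le_biSup 𝒜 hj t ht, ?_⟩
  calc μ (s ∆ t) ≤ μ (s ∆ a) + μ (a ∆ t) := measure_symmDiff_le s a t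
    _ < ε / 2 + ε / 2 := ENNReal.add_lt_add hsa hat
    _ = ε := ENNReal.add_halves ε

end MeasureTheory

/-- A monotone family of sub-σ-algebras of a standard probability space, indexed
by a linearly ordered set I, admits a countable subset J ⊆ I such that the σ-algebra generated
by the whole family equals the one generated by the subfamily, up to null sets. -/
theorem monotone_family_countable_cofinal_subfamily
    {X : Type*} [mX : MeasurableSpace X] [StandardBorelSpace X]
    (μ : Measure X) [IsProbabilityMeasure μ]
    {I : Type*} [LinearOrder I]
    (𝒜 : I → MeasurableSpace X)
    (hle : ∀ i, 𝒜 i ≤ mX)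
    (hmono : Monotone 𝒜) :
    ∃ J : Set I, J.Countable ∧
      ∀ s : Set X, MeasurableSet[⨆ i, 𝒜 i] s →
        ∃ t : Set X, MeasurableSet[⨆ j ∈ J, 𝒜 j] t ∧ μ (symmDiff s t) = 0 := by
  rcases isEmpty_or_nonempty I with hI | hI
  · exact ⟨univ, countable_univ, fun s hs ↦ ⟨s, by rwa [iSup_univ], by simp⟩⟩
  obtain ⟨J, hJc, hJ⟩ := exists_countable_approx_iSup μ 𝒜 hle hmono.directed_le
  exact ⟨J, hJc, fun s hs ↦ exists_measurableSet_measure_symmDiff_eq_zero (hJ s hs)⟩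
end
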